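/- For X = P^2 and degree d ≥ 1, writing n_{0,d} for the number of rational degree-d plane curves through 3d−1 generic points, assume the Kontsevich–Manin/Ruan–Tian recursion 6(d−1)·n_{0,d} = ∑_{d_1+d_2=d, d_1,d_2≥1} C(3d−2, 3d_1−1) d_1 d_2 n_{0,d_1} n_{0,d_2} ( d_1 d_2 − 2(d_1−d_2)^2/(3d−2) ). Then the formula n_{2,d} = 3(d^2−1)n_{0,d} + n_{0,d}(−36 + 36/d) + ∑_{d_1+d_2=d} C(3d−2, 3d_1−1) n_{0,d_1} n_{0,d_2} d_1 d_2 (−18 d_1 d_2/d + d_1^2 d_2^2/2 + 10) is equal to Zinger's formula n_{2,d} = 3(d^2−1)n_{0,d} + (1/2) ∑_{d_1+d_2=d} C(3d−2, 3d_1−1) d_1 d_2 n_{0,d_1} n_{0,d_2} ( d_1^2 d_2^2 + 28 − 16(9 d_1 d_2 − 1)/(3d−2) ). -/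

import Mathlib

/-!
Substituting the recursion for `6 (d - 1) n_{0,d}` turns the correction term
`n_{0,d} (-36 + 36/d) = -(6/d) · 6 (d - 1) n_{0,d}` into a sum over the same splittings
`d₁ + d₂ = d` as the other two sums, and the two formulas then agree summand by summand:
with `x = d₁`, `y = d₂`, `x + y = d`, each summand reduces to a rational-function identity in `x, y`.
-/

lemma mul_neg_add_div_eq {K : Type*} [Field K] {d : K} (hd : d ≠ 0) (a : K) :
    a * (-36 + 36 / d) = -6 / d * (6 * (d - 1) * a) := by
  field_simp
  ring

lemma zinger_summand_eq {K : Type*} [Field K] [CharZero K] {d x y : K} (hd : d ≠ 0)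
    (h3 : 3 * d - 2 ≠ 0) (hxy : x + y = d) :
    -6 / d * (x * y * (x * y - 2 * (x - y) ^ 2 / (3 * d - 2))) +
        x * y * (-(18 * x * y) / d + x ^ 2 * y ^ 2 / 2 + 10) =
      1 / 2 * (x * y * (x ^ 2 * y ^ 2 + 28 - 16 * (9 * x * y - 1) / (3 * d - 2))) := by
  have h3' : d * 3 - 2 ≠ 0 := by rwa [mul_comm]
  field_simp
  subst hxy
  ring

theorem intermediate_eq_zinger_general
    (n : ℕ → ℚ)
    (hrec : ∀ d : ℕ, 2 ≤ d →
      6 * ((d : ℚ) - 1) * n d =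
        ∑ d1 ∈ Finset.Ico 1 d,
          (Nat.choose (3 * d - 2) (3 * d1 - 1) : ℚ) * d1 * ((d : ℚ) - d1) * n d1 * n (d - d1) *
            ((d1 : ℚ) * ((d : ℚ) - d1) -
              2 * ((d1 : ℚ) - ((d : ℚ) - d1)) ^ 2 / (3 * (d : ℚ) - 2)))
    (d : ℕ) (hd : 2 ≤ d) :
    3 * ((d : ℚ) ^ 2 - 1) * n d + n d * (-36 + 36 / (d : ℚ)) +
      ∑ d1 ∈ Finset.Ico 1 d,
        (Nat.choose (3 * d - 2) (3 * d1 - 1) : ℚ) * n d1 * n (d - d1) * d1 * ((d : ℚ) - d1) *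
          (-(18 * (d1 : ℚ) * ((d : ℚ) - d1)) / (d : ℚ) +
            (d1 : ℚ) ^ 2 * ((d : ℚ) - d1) ^ 2 / 2 + 10)
    = 3 * ((d : ℚ) ^ 2 - 1) * n d +
      (1 / 2) * ∑ d1 ∈ Finset.Ico 1 d,
        (Nat.choose (3 * d - 2) (3 * d1 - 1) : ℚ) * d1 * ((d : ℚ) - d1) * n d1 * n (d - d1) *
          ((d1 : ℚ) ^ 2 * ((d : ℚ) - d1) ^ 2 + 28 -
            16 * (9 * (d1 : ℚ) * ((d : ℚ) - d1) - 1) / (3 * (d : ℚ) - 2)) := by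
  have hd2 : (2 : ℚ) ≤ d := by exact_mod_cast hd
  have hd0 : (d : ℚ) ≠ 0 := by linarith
  have h3 : 3 * (d : ℚ) - 2 ≠ 0 := by linarith
  rw [mul_neg_add_div_eq hd0, hrec d hd, Finset.mul_sum, Finset.mul_sum, add_assoc,
    ← Finset.sum_add_distrib]
  congr 1
  refine Finset.sum_congr rfl fun d1 _ => ?_
  linear_combination ((Nat.choose (3 * d - 2) (3 * d1 - 1) : ℚ) * n d1 * n (d - d1)) *
    zinger_summand_eq hd0 h3 (add_sub_cancel (d1 : ℚ) d)

/-- For `X = P²`, let `n d` (`= n_{0,d}`) be rational numbers with `n 1 = 1`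
satisfying the Kontsevich–Manin/Ruan–Tian recursion for all `d ≥ 2`.  Then for every `d ≥ 2`
the intermediate formula for the genus-two count equals Zinger's formula.  Sums run over
ordered pairs `(d₁, d₂)` of positive integers with `d₁ + d₂ = d`, encoded as `d₁ ∈ Ico 1 d`
with `d₂ = d - d₁`. -/
theorem intermediate_eq_zinger
    (n : ℕ → ℚ) (hn1 : n 1 = 1)
    (hrec : ∀ d : ℕ, 2 ≤ d →
      6 * ((d : ℚ) - 1) * n d =
        ∑ d1 ∈ Finset.Ico 1 d,
          (Nat.choose (3 * d - 2) (3 * d1 - 1) : ℚ) * d1 * ((d : ℚ) - d1) * n d1 * n (d - d1) *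
            ((d1 : ℚ) * ((d : ℚ) - d1) -
              2 * ((d1 : ℚ) - ((d : ℚ) - d1)) ^ 2 / (3 * (d : ℚ) - 2)))
    (d : ℕ) (hd : 2 ≤ d) :
    3 * ((d : ℚ) ^ 2 - 1) * n d + n d * (-36 + 36 / (d : ℚ)) +
      ∑ d1 ∈ Finset.Ico 1 d,
        (Nat.choose (3 * d - 2) (3 * d1 - 1) : ℚ) * n d1 * n (d - d1) * d1 * ((d : ℚ) - d1) *
          (-(18 * (d1 : ℚ) * ((d : ℚ) - d1)) / (d : ℚ) +
            (d1 : ℚ) ^ 2 * ((d : ℚ) - d1) ^ 2 / 2 + 10)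
    = 3 * ((d : ℚ) ^ 2 - 1) * n d +
      (1 / 2) * ∑ d1 ∈ Finset.Ico 1 d,
        (Nat.choose (3 * d - 2) (3 * d1 - 1) : ℚ) * d1 * ((d : ℚ) - d1) * n d1 * n (d - d1) *
          ((d1 : ℚ) ^ 2 * ((d : ℚ) - d1) ^ 2 + 28 -
            16 * (9 * (d1 : ℚ) * ((d : ℚ) - d1) - 1) / (3 * (d : ℚ) - 2)) :=
  intermediate_eq_zinger_general n hrec d hd
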